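/- Let f₀ be a continuous density on ℝᵈ, positive everywhere, with f₀(x)/g₀(x) → 1 as ‖x‖ → ∞ for some function g₀, and suppose ∫_{g₀ ≤ t} g₀ dλ ≤ c₂ t^β as t → 0 for some c₂ > 0 and β ∈ (0,1]. Assume inf_{‖x‖≤A} f₀(x) > 0 for every A > 0. Then there exists c > 0 such that ∫_{f₀ ≤ t} f₀ dλ ≤ c t^β for all small t > 0. -/
import Mathlib


open MeasureTheory Filter

theorem tail_condition_transfer
    (d : ℕ) (f₀ g₀ : (Fin d → ℝ) → ℝ) (β c₂ : ℝ)
    (hfc : Continuous f₀) (hfpos : ∀ x, 0 < f₀ x)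
    (hfi : Integrable f₀) (hf1 : ∫ x, f₀ x = 1)
    (hgm : Measurable g₀) (hg0 : ∀ x, 0 ≤ g₀ x)
    (hratio : Tendsto (fun x => f₀ x / g₀ x)
      (Filter.cocompact (Fin d → ℝ)) (nhds 1))
    (hβ : β ∈ Set.Ioc (0:ℝ) 1) (hc₂ : 0 < c₂)
    (hgtail : ∃ t₁ > 0, ∀ t : ℝ, 0 < t → t < t₁ →
      (∫ x in {x | g₀ x ≤ t}, g₀ x) ≤ c₂ * t ^ β)
    (hinf : ∀ A > 0, 0 < ⨅ x : {x : Fin d → ℝ // ‖x‖ ≤ A}, f₀ x) :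
    ∃ c > 0, ∃ t₀ > 0, ∀ t : ℝ, 0 < t → t < t₀ →
      (∫ x in {x | f₀ x ≤ t}, f₀ x) ≤ c * t ^ β := by
  obtain ⟨t₁, ht₁, hg⟩ := hgtail
  obtain ⟨hβ0, hβ1⟩ := hβ
  have h1 : Set.Ioo (1/2 : ℝ) (3/2) ∈ nhds (1:ℝ) := by
    apply Ioo_mem_nhds <;> norm_num
  have h2 := hratio h1
  rw [mem_map, mem_cocompact] at h2
  obtain ⟨K, hK, hKsub⟩ := h2
  obtain ⟨r, hr⟩ := hK.isBounded.subset_closedBall 0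
  set A := max r 1 with hA
  have hApos : (0:ℝ) < A := lt_of_lt_of_le one_pos (le_max_right _ _)
  have hout : ∀ x : Fin d → ℝ, A < ‖x‖ → g₀ x ≤ 2 * f₀ x ∧ f₀ x ≤ 3/2 * g₀ x := by
    intro x hx
    have hxK : x ∉ K := by
      intro hxK
      have h3 := hr hxK
      rw [Metric.mem_closedBall, dist_zero_right] at h3
      have := le_max_left r 1
      linarith
    have hmem : f₀ x / g₀ x ∈ Set.Ioo (1/2:ℝ) (3/2) := hKsub hxK
    have hgpos : 0 < g₀ x := by
      by_contra h
      have hz : g₀ x = 0 := le_antisymm (not_lt.mp h) (hg0 x)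
      rw [Set.mem_Ioo, hz, div_zero] at hmem
      have := hmem.1
      norm_num at this
    constructor
    · have := hmem.1
      rw [Set.mem_Ioo, lt_div_iff₀ hgpos] at hmem
      linarith [hmem.1]
    · rw [Set.mem_Ioo, div_lt_iff₀ hgpos] at hmem
      linarith [hmem.2]
  have hm := hinf A hApos
  set m := ⨅ x : {x : Fin d → ℝ // ‖x‖ ≤ A}, f₀ x with hmdef
  refine ⟨3/2 * c₂ * 2 ^ β, by positivity, min m (t₁/2), lt_min hm (by linarith), ?_⟩
  intro t ht htlt
  have htm : t < m := lt_of_lt_of_le htlt (min_le_left _ _)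
  have htt₁ : 2 * t < t₁ := by
    have := lt_of_lt_of_le htlt (min_le_right _ _); linarith
  have hsubA : {x | f₀ x ≤ t} ⊆ {x : Fin d → ℝ | A < ‖x‖} := by
    intro x hx
    by_contra h
    have hxA : ‖x‖ ≤ A := not_lt.mp h
    have hmx : m ≤ f₀ x :=
      ciInf_le ⟨0, by rintro _ ⟨y, rfl⟩; exact (hfpos y.1).le⟩ (⟨x, hxA⟩ : {x : Fin d → ℝ // ‖x‖ ≤ A})
    exact absurd hx (not_le.mpr (lt_of_lt_of_le htm hmx))
  have hsub2 : {x | f₀ x ≤ t} ⊆ {x | g₀ x ≤ 2*t} := by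
    intro x hx
    have h4 := (hout x (hsubA hx)).1
    have : f₀ x ≤ t := hx
    simp only [Set.mem_setOf_eq]
    linarith
  have hSf : MeasurableSet {x : Fin d → ℝ | f₀ x ≤ t} :=
    measurableSet_le hfc.measurable measurable_const
  have hSg : MeasurableSet {x : Fin d → ℝ | g₀ x ≤ 2*t} :=
    measurableSet_le hgm measurable_const
  -- integrability of g₀ on {g₀ ≤ 2t}
  have hIg2 : IntegrableOn g₀ {x | g₀ x ≤ 2*t} := by
    have hcover : {x : Fin d → ℝ | g₀ x ≤ 2*t} ⊆
        ({x | g₀ x ≤ 2*t} ∩ Metric.closedBall 0 A) ∪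
        ({x | g₀ x ≤ 2*t} ∩ (Metric.closedBall 0 A)ᶜ) := by
      intro x hx
      by_cases h : x ∈ Metric.closedBall (0 : Fin d → ℝ) A
      · exact Or.inl ⟨hx, h⟩
      · exact Or.inr ⟨hx, h⟩
    refine IntegrableOn.mono_set (IntegrableOn.union ?_ ?_) hcover
    · refine Measure.integrableOn_of_bounded (M := 2*t)
        (ne_of_lt (lt_of_le_of_lt (measure_mono Set.inter_subset_right)
          measure_closedBall_lt_top)) hgm.aestronglyMeasurable ?_
      filter_upwards [ae_restrict_mem (hSg.inter measurableSet_closedBall)] with x hx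
      rw [Real.norm_eq_abs, abs_of_nonneg (hg0 x)]
      exact hx.1
    · refine Integrable.mono' ((hfi.const_mul 2).integrableOn)
        hgm.aestronglyMeasurable.restrict ?_
      filter_upwards [ae_restrict_mem (hSg.inter measurableSet_closedBall.compl)] with x hx
      have hxn : A < ‖x‖ := by
        have h5 := hx.2
        rw [Set.mem_compl_iff, Metric.mem_closedBall, dist_zero_right, not_le] at h5
        exact h5
      rw [Real.norm_eq_abs, abs_of_nonneg (hg0 x)]
      exact (hout x hxn).1
  have hIg1 : IntegrableOn g₀ {x | f₀ x ≤ t} := hIg2.mono_set hsub2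
  have step1 : (∫ x in {x | f₀ x ≤ t}, f₀ x) ≤ ∫ x in {x | f₀ x ≤ t}, 3/2 * g₀ x := by
    refine setIntegral_mono_on hfi.integrableOn (hIg1.const_mul (3/2)) hSf ?_
    intro x hx
    exact (hout x (hsubA hx)).2
  have step2 : (∫ x in {x | f₀ x ≤ t}, 3/2 * g₀ x) = 3/2 * ∫ x in {x | f₀ x ≤ t}, g₀ x :=
    MeasureTheory.integral_const_mul _ _
  have step3 : (∫ x in {x | f₀ x ≤ t}, g₀ x) ≤ ∫ x in {x | g₀ x ≤ 2*t}, g₀ x := by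
    refine setIntegral_mono_set hIg2 (ae_of_all _ hg0) (HasSubset.Subset.eventuallyLE hsub2)
  have step4 : (∫ x in {x | g₀ x ≤ 2*t}, g₀ x) ≤ c₂ * (2*t) ^ β :=
    hg (2*t) (by linarith) htt₁
  have hpow : (2*t) ^ β = 2 ^ β * t ^ β := Real.mul_rpow (by norm_num) ht.le
  calc (∫ x in {x | f₀ x ≤ t}, f₀ x)
      ≤ 3/2 * ∫ x in {x | f₀ x ≤ t}, g₀ x := by rw [← step2]; exact step1
    _ ≤ 3/2 * (c₂ * (2*t) ^ β) := by
        have := le_trans step3 step4; linarith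
    _ = 3/2 * c₂ * 2 ^ β * t ^ β := by rw [hpow]; ring
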